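/- arXiv:2412.17638 — 2 statements merged into one kernel-verified Lean document; each statement's English description precedes it below -/
import Mathlib

section
/- Transversality at a point is independent of the choice of defining maps: if H_1,...,H_a are submanifolds of M containing p and for one choice of defining maps F_i of (H_i,p) the combined map (F_1,...,F_a) is a submersion at p, then the same holds for any other choice of defining maps. -/
/-!
STATEMENT 6: Transversality at a point is independent of the choice of defining maps:
if for one choice of defining maps `F_i` of `(H_i, p)` the combined map `(F_1,...,F_a)`
is a submersion at `p`, then the same holds for any other choice `G_i` of defining maps.
-/

/-- `F : ℝ^d → ℝ^c` is a defining map for the pair `(H, p)` on the open neighborhood `U`. -/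
def IsDefiningMapOn (d c : ℕ) (H : Set (EuclideanSpace ℝ (Fin d)))
    (p : EuclideanSpace ℝ (Fin d)) (U : Set (EuclideanSpace ℝ (Fin d)))
    (F : EuclideanSpace ℝ (Fin d) → EuclideanSpace ℝ (Fin c)) : Prop :=
  IsOpen U ∧ p ∈ U ∧ ContDiffOn ℝ (⊤ : ℕ∞) F U ∧
    (∀ x ∈ U, Function.Surjective (fderiv ℝ F x)) ∧
    H ∩ U = U ∩ F ⁻¹' {F p}

/-- Key lemma: the kernel of the differential of one defining map at `p` is contained in the
kernel of the differential of any other defining map at `p`. -/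
lemma ker_le_ker_of_defining {d c c' : ℕ} {H : Set (EuclideanSpace ℝ (Fin d))}
    {p : EuclideanSpace ℝ (Fin d)} {U V : Set (EuclideanSpace ℝ (Fin d))}
    {F : EuclideanSpace ℝ (Fin d) → EuclideanSpace ℝ (Fin c)}
    {G : EuclideanSpace ℝ (Fin d) → EuclideanSpace ℝ (Fin c')}
    (hF : IsDefiningMapOn d c H p U F) (hG : IsDefiningMapOn d c' H p V G) :
    LinearMap.ker (fderiv ℝ G p).toLinearMap ≤ LinearMap.ker (fderiv ℝ F p).toLinearMap := by
  obtain ⟨hUo, hpU, hFc, hFs, hFset⟩ := hF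
  obtain ⟨hVo, hpV, hGc, hGs, hGset⟩ := hG
  set g' : EuclideanSpace ℝ (Fin d) →L[ℝ] EuclideanSpace ℝ (Fin c') := fderiv ℝ G p with hg'
  have hGca : ContDiffAt ℝ (⊤ : ℕ∞) G p := hGc.contDiffAt (hVo.mem_nhds hpV)
  have hGd : HasStrictFDerivAt G g' p := hGca.hasStrictFDerivAt (by simp)
  have hrange : g'.range = ⊤ := LinearMap.range_eq_top.2 (hGs p hpV)
  intro w hw
  set v : g'.ker := ⟨w, hw⟩ with hv
  set γ : ℝ → EuclideanSpace ℝ (Fin d) :=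
    fun t => hGd.implicitFunction G g' hrange (G p) (t • v) with hγ
  have hγ0 : γ 0 = p := by
    simp [hγ, hGd.implicitFunction_apply_image hrange]
  -- derivative of γ at 0 is w
  have hψ : HasDerivAt (fun t : ℝ => t • v) v 0 := by
    simpa using (hasDerivAt_id (0 : ℝ)).smul_const v
  have hφ : HasFDerivAt (hGd.implicitFunction G g' hrange (G p))
      (g'.ker).subtypeL ((fun t : ℝ => t • v) 0) := by
    simpa using (hGd.to_implicitFunction hrange).hasFDerivAt
  have hγd : HasDerivAt γ w 0 := by
    exact hφ.comp_hasDerivAt 0 hψ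
  -- γ lies in H eventually
  have htend : Filter.Tendsto (fun t : ℝ => ((G p, t • v) : _ × g'.ker))
      (nhds 0) (nhds (G p, (0 : g'.ker))) := by
    refine Filter.Tendsto.prodMk_nhds tendsto_const_nhds ?_
    simpa using hψ.continuousAt.tendsto
  have hGγ : ∀ᶠ t in nhds (0 : ℝ), G (γ t) = G p := by
    filter_upwards [htend.eventually (hGd.map_implicitFunction_eq hrange)] with t ht
    exact ht
  have hγcont : ContinuousAt γ 0 := hγd.continuousAt
  have hγV : ∀ᶠ t in nhds (0 : ℝ), γ t ∈ V := by
    have := hγcont.preimage_mem_nhds (hVo.mem_nhds (hγ0 ▸ hpV))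
    exact this
  have hγU : ∀ᶠ t in nhds (0 : ℝ), γ t ∈ U := by
    have := hγcont.preimage_mem_nhds (hUo.mem_nhds (hγ0 ▸ hpU))
    exact this
  have hFγ : ∀ᶠ t in nhds (0 : ℝ), F (γ t) = F p := by
    filter_upwards [hGγ, hγV, hγU] with t h1 h2 h3
    have hmemH : γ t ∈ H := by
      have : γ t ∈ V ∩ G ⁻¹' {G p} := ⟨h2, by simpa using h1⟩
      rw [← hGset] at this
      exact this.1
    have : γ t ∈ U ∩ F ⁻¹' {F p} := by rw [← hFset]; exact ⟨hmemH, h3⟩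
    simpa using this.2
  -- differentiate F ∘ γ
  have hFd : HasFDerivAt F (fderiv ℝ F p) p :=
    ((hFc.contDiffAt (hUo.mem_nhds hpU)).differentiableAt (by simp)).hasFDerivAt
  have hcomp : HasDerivAt (fun t => F (γ t)) (fderiv ℝ F p w) 0 := by
    have hFd' : HasFDerivAt F (fderiv ℝ F p) (γ 0) := hγ0.symm ▸ hFd
    exact hFd'.comp_hasDerivAt 0 hγd
  have hconst : HasDerivAt (fun t => F (γ t)) 0 0 := by
    have h0 : HasDerivAt (fun _ : ℝ => F p) (0 : EuclideanSpace ℝ (Fin c)) 0 :=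
      hasDerivAt_const 0 (F p)
    exact h0.congr_of_eventuallyEq (hFγ.mono fun t ht => ht)
  have : fderiv ℝ F p w = 0 := hcomp.unique hconst
  exact this

theorem transversality_independent_of_defining_maps
    (d a : ℕ) (cdim : Fin a → ℕ) (H : Fin a → Set (EuclideanSpace ℝ (Fin d)))
    (p : EuclideanSpace ℝ (Fin d)) (hp : ∀ i, p ∈ H i)
    (UF UG : Fin a → Set (EuclideanSpace ℝ (Fin d)))
    (F G : (i : Fin a) → EuclideanSpace ℝ (Fin d) → EuclideanSpace ℝ (Fin (cdim i)))
    (hF : ∀ i, IsDefiningMapOn d (cdim i) (H i) p (UF i) (F i))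
    (hG : ∀ i, IsDefiningMapOn d (cdim i) (H i) p (UG i) (G i))
    (hsurj : Function.Surjective (fderiv ℝ (fun x => (fun i => F i x)) p)) :
    Function.Surjective (fderiv ℝ (fun x => (fun i => G i x)) p) := by
  have hFdiff : ∀ i, DifferentiableAt ℝ (F i) p := fun i =>
    ((hF i).2.2.1.contDiffAt ((hF i).1.mem_nhds (hF i).2.1)).differentiableAt (by simp)
  have hGdiff : ∀ i, DifferentiableAt ℝ (G i) p := fun i =>
    ((hG i).2.2.1.contDiffAt ((hG i).1.mem_nhds (hG i).2.1)).differentiableAt (by simp)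
  rw [fderiv_pi hGdiff]
  rw [fderiv_pi hFdiff] at hsurj
  set LF := ContinuousLinearMap.pi (fun i => fderiv ℝ (F i) p) with hLF
  set LG := ContinuousLinearMap.pi (fun i => fderiv ℝ (G i) p) with hLG
  have hkerLFG : LinearMap.ker LG.toLinearMap = LinearMap.ker LF.toLinearMap := by
    ext x
    simp only [LinearMap.mem_ker, ContinuousLinearMap.coe_coe,
      ContinuousLinearMap.pi_apply, hLF, hLG, funext_iff, Pi.zero_apply]
    refine forall_congr' fun i => ?_
    constructor
    · intro h
      exact ker_le_ker_of_defining (hF i) (hG i) (LinearMap.mem_ker.2 h)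
    · intro h
      exact ker_le_ker_of_defining (hG i) (hF i) (LinearMap.mem_ker.2 h)
  -- rank-nullity argument
  rw [← ContinuousLinearMap.coe_coe LG, ← LinearMap.range_eq_top]
  rw [← ContinuousLinearMap.coe_coe LF, ← LinearMap.range_eq_top] at hsurj
  have h1 := LinearMap.finrank_range_add_finrank_ker LF.toLinearMap
  have h2 := LinearMap.finrank_range_add_finrank_ker LG.toLinearMap
  apply Submodule.eq_top_of_finrank_eq
  have h3 : Module.finrank ℝ (LinearMap.range LF.toLinearMap) =
      Module.finrank ℝ ((i : Fin a) → EuclideanSpace ℝ (Fin (cdim i))) := by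
    rw [hsurj]; exact finrank_top _ _
  rw [hkerLFG] at h2
  omega
end

section
/- Let M be a smooth manifold, H_1,...,H_a smooth submanifolds, p ∈ ∩_{i=1}^a H_i, and suppose H_1,...,H_b (for some b < a) are transversal at p, with L := ∩_{i=1}^b H_i a submanifold near p. Then H_1,...,H_a are transversal at p if and only if there exist defining maps F_j: U_j → ℝ^{n_j} of (H_j,p) for j = b+1,...,a such that the restriction (F_{b+1},...,F_a)|_{U∩L}: U∩L → ℝ^{n_{b+1}+...+n_a} is a submersion at p (where U = ∩_{j>b} U_j). -/
open Function Set Filter Topology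


/-- Transversality at `p` of the family `H` of submanifolds with codimensions `cdim`. -/
def TransversalAt (d a : ℕ) (cdim : Fin a → ℕ) (H : Fin a → Set (EuclideanSpace ℝ (Fin d)))
    (p : EuclideanSpace ℝ (Fin d)) : Prop :=
  letI : DecidablePred fun i : Fin a => p ∈ H i := Classical.decPred _
  ∃ (U : Set (EuclideanSpace ℝ (Fin d)))
    (F : (i : Fin a) → EuclideanSpace ℝ (Fin d) → EuclideanSpace ℝ (Fin (cdim i))),
    (∀ i : Fin a, p ∈ H i → IsDefiningMapOn d (cdim i) (H i) p U (F i)) ∧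
    Function.Surjective
      (fderiv ℝ (fun x => (fun i : {i : Fin a // p ∈ H i} => F i.1 x)) p)

lemma ker_le_ker_of_eventually_const
    {E F' G' : Type*} [NormedAddCommGroup E] [NormedSpace ℝ E] [CompleteSpace E]
    [NormedAddCommGroup F'] [NormedSpace ℝ F'] [FiniteDimensional ℝ F']
    [NormedAddCommGroup G'] [NormedSpace ℝ G']
    {f : E → F'} {g : E → G'} {p : E}
    (hf : HasStrictFDerivAt f (fderiv ℝ f p) p)
    (hsurj : Function.Surjective (fderiv ℝ f p))
    (hg : DifferentiableAt ℝ g p)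
    (hconst : ∀ᶠ x in 𝓝 p, f x = f p → g x = g p) :
    ∀ v, fderiv ℝ f p v = 0 → fderiv ℝ g p v = 0 := by
  set f' := fderiv ℝ f p with hf'def
  have hrange : LinearMap.range f'.toLinearMap = ⊤ := LinearMap.range_eq_top.2 hsurj
  set φ : F' → LinearMap.ker f'.toLinearMap → E := hf.implicitFunction f f' hrange with hφdef
  have hφ : HasStrictFDerivAt (φ (f p)) (LinearMap.ker f'.toLinearMap).subtypeL 0 :=
    hf.to_implicitFunction hrange
  have hφ0 : φ (f p) 0 = p := hf.implicitFunction_apply_image hrange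
  have hmap : ∀ᶠ z : LinearMap.ker f'.toLinearMap in 𝓝 0, f (φ (f p) z) = f p := by
    have h1 : Filter.Tendsto (fun z : LinearMap.ker f'.toLinearMap => ((f p : F'), z)) (𝓝 0)
        (𝓝 (f p, 0)) := tendsto_const_nhds.prodMk_nhds tendsto_id
    exact h1.eventually (hf.map_implicitFunction_eq hrange)
  have hnhds : Filter.Tendsto (φ (f p)) (𝓝 0) (𝓝 p) := by
    have := hφ.differentiableAt.continuousAt
    rwa [ContinuousAt, hφ0] at this
  have hgconst : ∀ᶠ z : LinearMap.ker f'.toLinearMap in 𝓝 0, g (φ (f p) z) = g p :=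
    (hmap.and (hnhds.eventually hconst)).mono fun z hz => hz.2 hz.1
  have hcomp : HasFDerivAt (fun z : LinearMap.ker f'.toLinearMap => g (φ (f p) z))
      ((fderiv ℝ g p).comp (LinearMap.ker f'.toLinearMap).subtypeL) 0 := by
    have hgp : HasFDerivAt g (fderiv ℝ g p) (φ (f p) 0) := by
      rw [hφ0]; exact hg.hasFDerivAt
    exact hgp.comp 0 hφ.hasFDerivAt
  have hzero : HasFDerivAt (fun z : LinearMap.ker f'.toLinearMap => g (φ (f p) z))
      (0 : LinearMap.ker f'.toLinearMap →L[ℝ] G') 0 :=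
    (hasFDerivAt_const (g p) (0 : LinearMap.ker f'.toLinearMap)).congr_of_eventuallyEq hgconst
  have hcl : (fderiv ℝ g p).comp (LinearMap.ker f'.toLinearMap).subtypeL =
      (0 : LinearMap.ker f'.toLinearMap →L[ℝ] G') := hcomp.unique hzero
  intro v hv
  have := ContinuousLinearMap.ext_iff.1 hcl ⟨v, hv⟩
  simpa using this

lemma IsDefiningMapOn.mono {d c : ℕ} {H : Set (EuclideanSpace ℝ (Fin d))}
    {p : EuclideanSpace ℝ (Fin d)} {U V : Set (EuclideanSpace ℝ (Fin d))}
    {F : EuclideanSpace ℝ (Fin d) → EuclideanSpace ℝ (Fin c)}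
    (h : IsDefiningMapOn d c H p U F) (hV : IsOpen V) (hpV : p ∈ V) (hVU : V ⊆ U) :
    IsDefiningMapOn d c H p V F := by
  obtain ⟨hU, hpU, hcd, hsj, heq⟩ := h
  refine ⟨hV, hpV, hcd.mono hVU, fun x hx => hsj x (hVU hx), ?_⟩
  ext x
  constructor
  · rintro ⟨hxH, hxV⟩
    have : x ∈ U ∩ F ⁻¹' {F p} := heq ▸ ⟨hxH, hVU hxV⟩
    exact ⟨hxV, this.2⟩
  · rintro ⟨hxV, hxF⟩
    have : x ∈ H ∩ U := heq.symm ▸ (⟨hVU hxV, hxF⟩ : x ∈ U ∩ F ⁻¹' {F p})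
    exact ⟨this.1, hxV⟩

lemma pi_surj_iff {ι : Type*} [Fintype ι] {E : Type*} [NormedAddCommGroup E] [NormedSpace ℝ E]
    {c : ι → ℕ} (Φ : (i : ι) → E →L[ℝ] EuclideanSpace ℝ (Fin (c i))) :
    Function.Surjective (ContinuousLinearMap.pi Φ) ↔
      ∀ y : (i : ι) → EuclideanSpace ℝ (Fin (c i)), ∃ x, ∀ i, Φ i x = y i := by
  simp only [Function.Surjective, funext_iff, ContinuousLinearMap.pi_apply]

theorem transversality_via_restriction_to_partial_intersection
    (d a b : ℕ) (hba : b < a) (cdim : Fin a → ℕ)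
    (H : Fin a → Set (EuclideanSpace ℝ (Fin d)))
    (p : EuclideanSpace ℝ (Fin d)) (hp : ∀ i, p ∈ H i)
    (hbtrans : TransversalAt d b (fun i => cdim (Fin.castLE hba.le i))
      (fun i => H (Fin.castLE hba.le i)) p)
    -- `L = ⋂_{i < b} H_i` is near `p` a submanifold, cut out by the defining map `G`:
    (UG : Set (EuclideanSpace ℝ (Fin d)))
    (G : EuclideanSpace ℝ (Fin d) →
      EuclideanSpace ℝ (Fin (∑ i : Fin b, cdim (Fin.castLE hba.le i))))
    (hG : IsDefiningMapOn d (∑ i : Fin b, cdim (Fin.castLE hba.le i))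
      (⋂ i : Fin b, H (Fin.castLE hba.le i)) p UG G) :
    (TransversalAt d a cdim H p ↔
      ∃ (UF : (j : {j : Fin a // b ≤ j.val}) → Set (EuclideanSpace ℝ (Fin d)))
        (F : (j : {j : Fin a // b ≤ j.val}) →
          EuclideanSpace ℝ (Fin d) → EuclideanSpace ℝ (Fin (cdim j.1))),
        (∀ j, IsDefiningMapOn d (cdim j.1) (H j.1) p (UF j) (F j)) ∧
        Function.Surjective
          ((fderiv ℝ (fun x => (fun j : {j : Fin a // b ≤ j.val} => F j x)) p).comp
            (LinearMap.ker (fderiv ℝ G p).toLinearMap).subtypeL)) := by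
  letI : DecidablePred fun i : Fin a => p ∈ H i := Classical.decPred _
  letI : DecidablePred fun i : Fin b => p ∈ H (Fin.castLE hba.le i) := Classical.decPred _
  obtain ⟨hUGopen, hpUG, hGcd, hGsj, hGeq⟩ := hG
  have hGdiff : ContDiffAt ℝ (⊤ : ℕ∞) G p := hGcd.contDiffAt (hUGopen.mem_nhds hpUG)
  constructor
  · rintro ⟨U, F, hdef, hsurj⟩
    have hUopen : IsOpen U := (hdef ⟨b, hba⟩ (hp _)).1
    have hpU : p ∈ U := (hdef ⟨b, hba⟩ (hp _)).2.1
    have hFd : ∀ i : Fin a, DifferentiableAt ℝ (F i) p := fun i =>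
      (((hdef i (hp i)).2.2.1).contDiffAt (hUopen.mem_nhds hpU)).differentiableAt (by simp)
    rw [fderiv_pi (fun i : {i : Fin a // p ∈ H i} => hFd i.1), pi_surj_iff] at hsurj
    -- the first-b juxtaposition
    set Φ : EuclideanSpace ℝ (Fin d) →
        ((i : Fin b) → EuclideanSpace ℝ (Fin (cdim (Fin.castLE hba.le i)))) :=
      fun x => fun i : Fin b => F (Fin.castLE hba.le i) x with hΦdef
    have hΦderiv : fderiv ℝ Φ p =
        ContinuousLinearMap.pi (fun i : Fin b => fderiv ℝ (F (Fin.castLE hba.le i)) p) :=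
      fderiv_pi (fun i => hFd _)
    have hΦsurj : Function.Surjective (fderiv ℝ Φ p) := by
      rw [hΦderiv, pi_surj_iff]
      intro y
      obtain ⟨x, hx⟩ := hsurj (fun i : {i : Fin a // p ∈ H i} =>
        if h : i.1.val < b then y ⟨i.1.val, h⟩ else 0)
      refine ⟨x, fun i => ?_⟩
      have := hx ⟨Fin.castLE hba.le i, hp _⟩
      rwa [dif_pos (show (Fin.castLE hba.le i).val < b from i.isLt)] at this
    have hΦcd : ContDiffAt ℝ (⊤ : ℕ∞) Φ p := by
      rw [contDiffAt_pi]
      exact fun i => ((hdef _ (hp _)).2.2.1).contDiffAt (hUopen.mem_nhds hpU)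
    have hΦconst : ∀ᶠ x in 𝓝 p, Φ x = Φ p → G x = G p := by
      filter_upwards [hUopen.mem_nhds hpU, hUGopen.mem_nhds hpUG] with x hxU hxUG hΦx
      have hxL : x ∈ ⋂ i : Fin b, H (Fin.castLE hba.le i) := by
        refine Set.mem_iInter.2 fun i => ?_
        have hFx : F (Fin.castLE hba.le i) x = F (Fin.castLE hba.le i) p := congrFun hΦx i
        have : x ∈ H (Fin.castLE hba.le i) ∩ U :=
          ((hdef _ (hp _)).2.2.2.2).symm ▸ (⟨hxU, hFx⟩ : x ∈ U ∩ _ ⁻¹' {_})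
        exact this.1
      have : x ∈ UG ∩ G ⁻¹' {G p} := hGeq ▸ (⟨hxL, hxUG⟩ : x ∈ _ ∩ UG)
      exact this.2
    have hker : ∀ v, fderiv ℝ Φ p v = 0 → fderiv ℝ G p v = 0 :=
      ker_le_ker_of_eventually_const (hΦcd.hasStrictFDerivAt (by simp)) hΦsurj
        (hGdiff.differentiableAt (by simp)) hΦconst
    refine ⟨fun _ => U, fun j => F j.1, fun j => hdef j.1 (hp j.1), ?_⟩
    rw [fderiv_pi (fun j : {j : Fin a // b ≤ j.val} => hFd j.1)]
    intro y
    obtain ⟨x, hx⟩ := hsurj (fun i : {i : Fin a // p ∈ H i} =>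
      if h : b ≤ i.1.val then y ⟨i.1, h⟩ else 0)
    have hxΦ : fderiv ℝ Φ p x = 0 := by
      rw [hΦderiv]
      funext i
      have := hx ⟨Fin.castLE hba.le i, hp _⟩
      rw [dif_neg (show ¬ b ≤ (Fin.castLE hba.le i).val from not_le.2 i.isLt)] at this
      simpa using this
    refine ⟨⟨x, LinearMap.mem_ker.2 (hker x hxΦ)⟩, ?_⟩
    funext j
    have := hx ⟨j.1, hp _⟩
    rwa [dif_pos j.2] at this
  · rintro ⟨UF, F, hdef, hsurj⟩
    obtain ⟨U', F', hdef', hsurj'⟩ := hbtrans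
    -- normalize U' to an open set (handles b = 0)
    set U0 : Set (EuclideanSpace ℝ (Fin d)) := if 0 < b then U' else Set.univ with hU0def
    have hdef'' : ∀ i : Fin b, IsDefiningMapOn d (cdim (Fin.castLE hba.le i))
        (H (Fin.castLE hba.le i)) p U0 (F' i) := fun i => by
      rw [hU0def, if_pos i.pos]; exact hdef' i (hp _)
    have hU0open : IsOpen U0 := by
      rw [hU0def]; split_ifs with h
      · exact (hdef' ⟨0, h⟩ (hp _)).1
      · exact isOpen_univ
    have hpU0 : p ∈ U0 := by
      rw [hU0def]; split_ifs with h
      · exact (hdef' ⟨0, h⟩ (hp _)).2.1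
      · trivial
    have hF'd : ∀ i : Fin b, DifferentiableAt ℝ (F' i) p := fun i =>
      (((hdef'' i).2.2.1).contDiffAt (hU0open.mem_nhds hpU0)).differentiableAt (by simp)
    have hFd : ∀ j : {j : Fin a // b ≤ j.val}, DifferentiableAt ℝ (F j) p := fun j =>
      (((hdef j).2.2.1).contDiffAt ((hdef j).1.mem_nhds (hdef j).2.1)).differentiableAt (by simp)
    -- the ambient open set
    set V : Set (EuclideanSpace ℝ (Fin d)) :=
      U0 ∩ ⋂ j : {j : Fin a // b ≤ j.val}, UF j with hVdef
    have hVopen : IsOpen V := hU0open.inter (isOpen_iInter_of_finite fun j => (hdef j).1)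
    have hpV : p ∈ V := ⟨hpU0, Set.mem_iInter.2 fun j => (hdef j).2.1⟩
    set Fall : (i : Fin a) → EuclideanSpace ℝ (Fin d) → EuclideanSpace ℝ (Fin (cdim i)) :=
      fun i => if h : i.val < b then F' ⟨i.val, h⟩ else F ⟨i, Nat.le_of_not_lt h⟩ with hFall
    have eFpos : ∀ (i : Fin a) (h : i.val < b), Fall i = F' ⟨i.val, h⟩ := fun i h => by
      rw [hFall]; exact dif_pos h
    have eFneg : ∀ (i : Fin a) (h : ¬ i.val < b), Fall i = F ⟨i, Nat.le_of_not_lt h⟩ :=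
      fun i h => by rw [hFall]; exact dif_neg h
    have hdall : ∀ i : Fin a, DifferentiableAt ℝ (Fall i) p := by
      intro i
      by_cases h : i.val < b
      · rw [eFpos i h]; exact hF'd ⟨i.val, h⟩
      · rw [eFneg i h]; exact hFd ⟨i, Nat.le_of_not_lt h⟩
    refine ⟨V, Fall, fun i _ => ?_, ?_⟩
    · by_cases h : i.val < b
      · rw [eFpos i h]
        exact (hdef'' ⟨i.val, h⟩).mono hVopen hpV Set.inter_subset_left
      · rw [eFneg i h]
        exact (hdef ⟨i, Nat.le_of_not_lt h⟩).mono hVopen hpV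
          (fun x hx => Set.mem_iInter.1 hx.2 ⟨i, Nat.le_of_not_lt h⟩)
    · rw [fderiv_pi (fun i : {i : Fin a // p ∈ H i} => hdall i.1), pi_surj_iff]
      intro y
      -- part 1: the first b components
      rw [fderiv_pi (fun i : {i : Fin b // p ∈ H (Fin.castLE hba.le i)} => hF'd i.1),
        pi_surj_iff] at hsurj'
      obtain ⟨x0, hx0⟩ := hsurj' (fun i => y ⟨Fin.castLE hba.le i.1, hp _⟩)
      -- part 2: the residual, inside ker dG
      rw [fderiv_pi hFd] at hsurj
      obtain ⟨k, hk⟩ := hsurj (fun j : {j : Fin a // b ≤ j.val} =>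
        y ⟨j.1, hp _⟩ - fderiv ℝ (F j) p x0)
      have hkj : ∀ j : {j : Fin a // b ≤ j.val},
          fderiv ℝ (F j) p k.1 = y ⟨j.1, hp _⟩ - fderiv ℝ (F j) p x0 := by
        intro j
        have := congrFun hk j
        simpa using this
      -- ker dG ⊆ ker dΦ'
      have hΦ'diff : DifferentiableAt ℝ
          (fun x => fun i : {i : Fin b // p ∈ H (Fin.castLE hba.le i)} => F' i.1 x) p :=
        differentiableAt_pi.2 fun i => hF'd i.1
      have hconst : ∀ᶠ x in 𝓝 p, G x = G p →
          (fun i : {i : Fin b // p ∈ H (Fin.castLE hba.le i)} => F' i.1 x) =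
          (fun i : {i : Fin b // p ∈ H (Fin.castLE hba.le i)} => F' i.1 p) := by
        filter_upwards [hUGopen.mem_nhds hpUG, hU0open.mem_nhds hpU0] with x hxUG hxU0 hGx
        have hxL : x ∈ ⋂ i : Fin b, H (Fin.castLE hba.le i) := by
          have : x ∈ (⋂ i : Fin b, H (Fin.castLE hba.le i)) ∩ UG :=
            hGeq.symm ▸ (⟨hxUG, hGx⟩ : x ∈ UG ∩ G ⁻¹' {G p})
          exact this.1
        funext i
        have hxH : x ∈ H (Fin.castLE hba.le i.1) := Set.mem_iInter.1 hxL i.1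
        have : x ∈ U0 ∩ F' i.1 ⁻¹' {F' i.1 p} := (hdef'' i.1).2.2.2.2 ▸ (⟨hxH, hxU0⟩ :
          x ∈ H (Fin.castLE hba.le i.1) ∩ U0)
        exact this.2
      have hkerG := ker_le_ker_of_eventually_const (hGdiff.hasStrictFDerivAt (by simp))
        (hGsj p hpUG) hΦ'diff hconst
      have hkΦ' : fderiv ℝ
          (fun x => fun i : {i : Fin b // p ∈ H (Fin.castLE hba.le i)} => F' i.1 x) p k.1 = 0 :=
        hkerG k.1 (LinearMap.mem_ker.1 k.2)
      rw [fderiv_pi (fun i : {i : Fin b // p ∈ H (Fin.castLE hba.le i)} => hF'd i.1)] at hkΦ'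
      have hkF' : ∀ i : Fin b, fderiv ℝ (F' i) p k.1 = 0 := fun i => by
        have := congrFun hkΦ' ⟨i, hp _⟩
        simpa using this
      refine ⟨x0 + k.1, fun i => ?_⟩
      by_cases h : i.1.val < b
      · rw [eFpos i.1 h]
        exact ((fderiv ℝ (F' ⟨i.1.val, h⟩) p).map_add x0 k.1).trans
          ((congrArg₂ (· + ·) (hx0 ⟨⟨i.1.val, h⟩, hp _⟩) (hkF' ⟨i.1.val, h⟩)).trans
            (add_zero _))
      · rw [eFneg i.1 h]
        exact ((fderiv ℝ (F ⟨i.1, Nat.le_of_not_lt h⟩) p).map_add x0 k.1).trans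
          ((congrArg (fun z => fderiv ℝ (F ⟨i.1, Nat.le_of_not_lt h⟩) p x0 + z)
            (hkj ⟨i.1, Nat.le_of_not_lt h⟩)).trans (add_sub_cancel _ _))
end
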